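/- Let K be a neighbourly triangulation of S^{2n+1} on the vertex set [m], let f : S^{2n+m+1} → \overline{Z_K} be the attaching map of the top cell of Z_K, and for I ∉ K, I ≠ [m] let p_I : \overline{Z_K} → Σ^{1+|I|}|K_I| be the composite \overline{Z_K} → Z_K → Z_{K_I} → Σ^{1+|I|}|K_I| (skeletal inclusion, retraction onto the full-subcomplex polyhedral product, BBCG retraction). Then for every such I the composite p_I ∘ f : S^{2n+m+1} → Σ^{1+|I|}|K_I| is null homotopic. -/

import Mathlib

noncomputable section

open scoped unitInterval

/-- The quotient of a space collapsing a subset `A` to a single point. -/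
def Collapse (X : Type) [TopologicalSpace X] (A : Set X) : Type :=
  Quot (fun a b : X => a ∈ A ∧ b ∈ A)

instance (X : Type) [TopologicalSpace X] (A : Set X) : TopologicalSpace (Collapse X A) :=
  instTopologicalSpaceQuot

/-- The quotient map for `Collapse`. -/
def Collapse.mk {X : Type} [TopologicalSpace X] (A : Set X) (x : X) : Collapse X A :=
  Quot.mk _ x

lemma Collapse.mk_continuous {X : Type} [TopologicalSpace X] (A : Set X) :
    Continuous (Collapse.mk A) := continuous_quot_mk

lemma Collapse.sound {X : Type} [TopologicalSpace X] {A : Set X} {a b : X}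
    (ha : a ∈ A) (hb : b ∈ A) : Collapse.mk A a = Collapse.mk A b :=
  Quot.sound ⟨ha, hb⟩

/-- Functoriality of collapsing. -/
def Collapse.map {X Y : Type} [TopologicalSpace X] [TopologicalSpace Y]
    {A : Set X} {B : Set Y} (f : C(X, Y)) (hf : ∀ a ∈ A, f a ∈ B) :
    C(Collapse X A, Collapse Y B) where
  toFun := Quot.lift (fun x => Collapse.mk B (f x))
    (fun a b hab => Collapse.sound (hf a hab.1) (hf b hab.2))
  continuous_toFun := continuous_quot_lift _ ((Collapse.mk_continuous B).comp f.continuous)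

/-- A pointed topological space. -/
structure PSp : Type 1 where
  carrier : Type
  [topInst : TopologicalSpace carrier]
  pt : carrier

attribute [instance] PSp.topInst

/-- A pointed continuous map. -/
structure PMap (P Q : PSp) where
  toC : C(P.carrier, Q.carrier)
  map_pt : toC P.pt = Q.pt

/-- The underlying subset of `P × I` collapsed to form the reduced suspension. -/
def suspCollapseSet (P : PSp) : Set (P.carrier × I) :=
  {q | q.2 = 0 ∨ q.2 = 1 ∨ q.1 = P.pt}

/-- The reduced suspension of a pointed space. -/
def PSp.susp (P : PSp) : PSp where
  carrier := Collapse (P.carrier × I) (suspCollapseSet P)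
  pt := Collapse.mk _ (P.pt, 0)

/-- Iterated reduced suspension. -/
def PSp.suspN (P : PSp) : ℕ → PSp
  | 0 => P
  | k + 1 => (P.suspN k).susp

/-- The reduced suspension of a pointed map. -/
def PMap.susp {P Q : PSp} (f : PMap P Q) : PMap P.susp Q.susp where
  toC := Collapse.map (f.toC.prodMap (ContinuousMap.id I))
    (by
      rintro ⟨x, t⟩ h
      rcases h with h | h | h
      · exact Or.inl h
      · exact Or.inr (Or.inl h)
      · refine Or.inr (Or.inr ?_)
        show f.toC x = Q.pt
        rw [show x = P.pt from h, f.map_pt])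
  map_pt := by
    show Collapse.mk _ (f.toC P.pt, (0 : I)) = Collapse.mk _ (Q.pt, (0 : I))
    rw [f.map_pt]

/-- Iterated suspension of a pointed map. -/
def PMap.suspN {P Q : PSp} (f : PMap P Q) : (k : ℕ) → PMap (P.suspN k) (Q.suspN k)
  | 0 => f
  | k + 1 => (f.suspN k).susp

/-- The auxiliary space underlying a wedge sum. -/
def WedgeAux {ι : Type} (P : ι → PSp) : Type := (Σ i, (P i).carrier) ⊕ Unit

instance {ι : Type} (P : ι → PSp) : TopologicalSpace (WedgeAux P) :=
  instTopologicalSpaceSum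

/-- The subset collapsed to form the wedge. -/
def wedgeSet {ι : Type} (P : ι → PSp) : Set (WedgeAux P) :=
  {x | x = Sum.inr () ∨ ∃ i, x = Sum.inl ⟨i, (P i).pt⟩}

/-- The wedge sum of a family of pointed spaces. -/
def WedgePSp {ι : Type} (P : ι → PSp) : PSp where
  carrier := Collapse (WedgeAux P) (wedgeSet P)
  pt := Collapse.mk _ (Sum.inr ())

/-- Inclusion of a wedge summand. -/
def wedgeIncl {ι : Type} (P : ι → PSp) (i : ι) : PMap (P i) (WedgePSp P) where
  toC := ⟨fun x => Collapse.mk _ (Sum.inl ⟨i, x⟩),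
    (Collapse.mk_continuous _).comp (continuous_inl.comp continuous_sigmaMk)⟩
  map_pt := Collapse.sound (Or.inr ⟨i, rfl⟩) (Or.inl rfl)

/-- Composition of pointed maps. -/
def PMap.comp {P Q R : PSp} (g : PMap Q R) (f : PMap P Q) : PMap P R where
  toC := g.toC.comp f.toC
  map_pt := by
    show g.toC (f.toC P.pt) = R.pt
    rw [f.map_pt, g.map_pt]

/-- The constant pointed map. -/
def PMap.const (P Q : PSp) : PMap P Q := ⟨ContinuousMap.const _ Q.pt, rfl⟩

/-- The universal property of the wedge: a family of pointed maps to `Q` induces a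
pointed map from the wedge. -/
def wedgeLift {ι : Type} {P : ι → PSp} {Q : PSp} (g : ∀ i, PMap (P i) Q) :
    PMap (WedgePSp P) Q where
  toC := ⟨Quot.lift (Sum.elim (fun p => (g p.1).toC p.2) (fun _ => Q.pt))
      (by
        rintro a b ⟨ha, hb⟩
        have val : ∀ c ∈ wedgeSet P,
            Sum.elim (fun p : Σ i, (P i).carrier => (g p.1).toC p.2) (fun _ : Unit => Q.pt) c
              = Q.pt := by
          rintro c (rfl | ⟨i, rfl⟩)
          · rfl
          · exact (g i).map_pt
        rw [val a ha, val b hb]),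
    continuous_quot_lift _ (Continuous.sumElim
      (continuous_sigma fun i => ((g i).toC.continuous : Continuous fun a => (g i).toC a))
      continuous_const)⟩
  map_pt := rfl

/-- The projection of the wedge onto one of its summands (collapsing the others). -/
def wedgeProj {ι : Type} [DecidableEq ι] (P : ι → PSp) (i : ι) : PMap (WedgePSp P) (P i) where
  toC := ⟨Quot.lift (Sum.elim
      (fun p => if h : p.1 = i then (h ▸ p.2 : (P i).carrier) else (P i).pt) (fun _ => (P i).pt))
      (by
        rintro a b ⟨ha, hb⟩
        have val : ∀ c ∈ wedgeSet P,
            Sum.elim (fun p : Σ j, (P j).carrier =>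
              if h : p.1 = i then (h ▸ p.2 : (P i).carrier) else (P i).pt)
              (fun _ : Unit => (P i).pt) c = (P i).pt := by
          rintro c (rfl | ⟨j, rfl⟩)
          · rfl
          · by_cases h : j = i
            · subst h; simp
            · simp [h]
        rw [val a ha, val b hb]),
    continuous_quot_lift _ (Continuous.sumElim
      (continuous_sigma fun j => by
        by_cases h : j = i
        · subst h; simpa using continuous_id'
        · simpa [h] using continuous_const)
      continuous_const)⟩
  map_pt := rfl

/-- A continuous map is a homotopy equivalence. -/
def IsHEquiv {X Y : Type} [TopologicalSpace X] [TopologicalSpace Y] (f : C(X, Y)) : Prop :=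
  ∃ g : C(Y, X), (f.comp g).Homotopic (ContinuousMap.id Y) ∧
    (g.comp f).Homotopic (ContinuousMap.id X)

/-- Two spaces are homotopy equivalent. -/
def HtpyEquiv (X Y : Type) [TopologicalSpace X] [TopologicalSpace Y] : Prop :=
  Nonempty (ContinuousMap.HomotopyEquiv X Y)

/-- The `d`-dimensional sphere, as the unit sphere in `(d+1)`-dimensional Euclidean space. -/
def sphereSpace (d : ℕ) : Type := ↥(Metric.sphere (0 : EuclideanSpace ℝ (Fin (d + 1))) 1)

instance (d : ℕ) : TopologicalSpace (sphereSpace d) := by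
  unfold sphereSpace; infer_instance

/-- A base point on the sphere. -/
def spherePt (d : ℕ) : sphereSpace d :=
  ⟨EuclideanSpace.single (0 : Fin (d + 1)) (1 : ℝ), by
    rw [mem_sphere_zero_iff_norm, EuclideanSpace.norm_single]; norm_num⟩

/-- The sphere as a pointed space. -/
def spherePSp (d : ℕ) : PSp := ⟨sphereSpace d, spherePt d⟩

/-- A space is (homotopy equivalent to) a finite wedge of spheres of prescribed dimensions. -/
def IsWedgeOfSpheres (X : Type) [TopologicalSpace X] (ℓ : ℕ) (dims : Fin ℓ → ℕ) : Prop :=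
  HtpyEquiv X (WedgePSp fun k : Fin ℓ => spherePSp (dims k)).carrier

end

noncomputable section

/-- An abstract simplicial complex on the vertex set `[m] = {1, …, m}` (modelled as `Fin m`),
given by its set of faces, which is closed under taking subsets. -/
structure SComplex (m : ℕ) where
  faces : Set (Finset (Fin m))
  empty_mem : ∅ ∈ faces
  down_closed : ∀ ⦃σ τ : Finset (Fin m)⦄, σ ∈ faces → τ ⊆ σ → τ ∈ faces

/-- `K` has all of `[m]` as vertices. -/
def SComplex.hasAllVertices {m : ℕ} (K : SComplex m) : Prop := ∀ i : Fin m, {i} ∈ K.faces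

/-- The full subcomplex of `K` on the vertex subset `I`. -/
def SComplex.fullSub {m : ℕ} (K : SComplex m) (I : Finset (Fin m)) : SComplex m where
  faces := {σ | σ ∈ K.faces ∧ σ ⊆ I}
  empty_mem := ⟨K.empty_mem, Finset.empty_subset I⟩
  down_closed := fun _ _ hσ hτσ => ⟨K.down_closed hσ.1 hτσ, hτσ.trans hσ.2⟩

/-- The geometric realization of `K`, as a subspace of `ℝ^m`:
convex combinations of vertices supported on a face. -/
def SComplex.realization {m : ℕ} (K : SComplex m) : Set (Fin m → ℝ) :=
  {x | (∀ i, 0 ≤ x i) ∧ (∑ i, x i) = 1 ∧ ∃ σ ∈ K.faces, ∀ i, x i ≠ 0 → i ∈ σ}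

/-- The geometric realization as a topological space. -/
def SComplex.geom {m : ℕ} (K : SComplex m) : Type := ↥K.realization

instance {m : ℕ} (K : SComplex m) : TopologicalSpace K.geom := by
  unfold SComplex.geom; infer_instance

/-- `K` is a triangulation of the sphere `S^d`: its geometric realization is homeomorphic
to the unit sphere in `ℝ^{d+1}`. -/
def SComplex.IsSphereTriangulation {m : ℕ} (K : SComplex m) (d : ℕ) : Prop :=
  Nonempty (K.geom ≃ₜ sphereSpace d)

/-- `K` is `n`-neighbourly: every `n+1` vertices span a face.  A triangulation of `S^{2n+1}`
is called neighbourly when it is `n`-neighbourly. -/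
def SComplex.IsNeighbourly {m : ℕ} (K : SComplex m) (n : ℕ) : Prop :=
  ∀ S : Finset (Fin m), S.card = n + 1 → S ∈ K.faces

/-- The vertex `i` of the geometric realization, as a point of `ℝ^m`. -/
def vertexPoint {m : ℕ} (i : Fin m) : Fin m → ℝ := fun j => if j = i then 1 else 0

lemma vertexPoint_mem {m : ℕ} {K : SComplex m} {i : Fin m} (h : {i} ∈ K.faces) :
    vertexPoint i ∈ K.realization := by
  refine ⟨fun j => ?_, ?_, {i}, h, fun j hj => ?_⟩
  · unfold vertexPoint; split <;> norm_num
  · simp [vertexPoint]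
  · unfold vertexPoint at hj
    by_cases hji : j = i
    · simp [hji]
    · simp [hji] at hj

lemma nonFace_nonempty {m : ℕ} {K : SComplex m} {I : Finset (Fin m)} (hI : I ∉ K.faces) :
    I.Nonempty := by
  rcases I.eq_empty_or_nonempty with rfl | h
  · exact absurd K.empty_mem hI
  · exact h

/-- The canonical base point of the realization of the full subcomplex `K_I`, for a
non-face `I` of a complex having all vertices: the vertex point of the least element of `I`. -/
def KIpt {m : ℕ} (K : SComplex m) (hv : K.hasAllVertices) (I : Finset (Fin m))
    (hI : I ∉ K.faces) : (K.fullSub I).geom :=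
  ⟨vertexPoint (I.min' (nonFace_nonempty hI)),
    vertexPoint_mem ⟨hv _, by simpa using I.min'_mem (nonFace_nonempty hI)⟩⟩

/-- The realization of a full subcomplex, as a pointed space (for a non-face `I`). -/
def KIPSp {m : ℕ} (K : SComplex m) (hv : K.hasAllVertices) (I : Finset (Fin m))
    (hI : I ∉ K.faces) : PSp :=
  ⟨(K.fullSub I).geom, KIpt K hv I hI⟩

/-! ### Moment-angle complexes -/

/-- The moment-angle complex of the full subcomplex `K_I`, realized as a subspace of `ℂ^m`
(the polyhedral product `(D²,S¹)^{K_I}`, embedded in `Z_K` with coordinates off `I` set to `1`). -/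
def subMomentAngle {m : ℕ} (K : SComplex m) (I : Finset (Fin m)) : Set (Fin m → ℂ) :=
  {z | (∀ i, ‖z i‖ ≤ 1) ∧ (∀ i, i ∉ I → z i = 1) ∧
    ∃ σ ∈ K.faces, ↑σ ⊆ (I : Set (Fin m)) ∧ ∀ i, i ∉ σ → ‖z i‖ = 1}

/-- The moment-angle complex `Z_K = (D², S¹)^K` as a subspace of `ℂ^m`. -/
def momentAngle {m : ℕ} (K : SComplex m) : Set (Fin m → ℂ) :=
  subMomentAngle K Finset.univ

/-- The moment-angle complex as a topological space. -/
def ZK {m : ℕ} (K : SComplex m) : Type := ↥(momentAngle K)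

instance {m : ℕ} (K : SComplex m) : TopologicalSpace (ZK K) := by
  unfold ZK; infer_instance

/-- The moment-angle complex of a full subcomplex, as a topological space. -/
def ZKI {m : ℕ} (K : SComplex m) (I : Finset (Fin m)) : Type := ↥(subMomentAngle K I)

instance {m : ℕ} (K : SComplex m) (I : Finset (Fin m)) : TopologicalSpace (ZKI K I) := by
  unfold ZKI; infer_instance

lemma subMomentAngle_subset {m : ℕ} (K : SComplex m) (I : Finset (Fin m)) :
    subMomentAngle K I ⊆ momentAngle K := by
  rintro z ⟨h1, h2, σ, hσ, hσI, h3⟩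
  exact ⟨h1, fun i hi => absurd (Finset.mem_univ i) hi,
    σ, hσ, by simp, h3⟩

/-- The inclusion `Z_{K_I} → Z_K` of polyhedral products induced by a full subcomplex. -/
def ZKIincl {m : ℕ} (K : SComplex m) (I : Finset (Fin m)) : C(ZKI K I, ZK K) :=
  ⟨Set.inclusion (subMomentAngle_subset K I), continuous_inclusion _⟩

/-- The canonical retraction `Z_K → Z_{K_I}` given by coordinatewise projection
(setting the coordinates off `I` equal to `1 ∈ S¹`). -/
def ZKproj {m : ℕ} (K : SComplex m) (I : Finset (Fin m)) : C(ZK K, ZKI K I) where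
  toFun z := ⟨fun i => if i ∈ I then z.val i else 1, by
    obtain ⟨h1, _h2, σ, hσ, _hσu, h3⟩ := z.2
    refine ⟨fun i => ?_, fun i hi => by simp [hi], σ ∩ I, K.down_closed hσ Finset.inter_subset_left,
      by simp, fun i hi => ?_⟩
    · by_cases hiI : i ∈ I
      · simpa [hiI] using h1 i
      · simp [hiI]
    · by_cases hiI : i ∈ I
      · have : i ∉ σ := fun hiσ => hi (Finset.mem_inter.mpr ⟨hiσ, hiI⟩)
        simpa [hiI] using h3 i this
      · simp [hiI]⟩
  continuous_toFun := by
    refine Continuous.subtype_mk ?_ _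
    refine continuous_pi fun i => ?_
    by_cases hiI : i ∈ I
    · simp only [hiI, if_true]
      exact (continuous_apply i).comp continuous_subtype_val
    · simpa [hiI] using continuous_const

lemma ZKproj_incl {m : ℕ} (K : SComplex m) (I : Finset (Fin m)) (z : ZKI K I) :
    (ZKproj K I) ((ZKIincl K I) z) = z := by
  obtain ⟨z, h1, h2, h3⟩ := z
  apply Subtype.ext
  funext i
  by_cases hiI : i ∈ I
  · show (if i ∈ I then z i else 1) = z i
    simp [hiI]
  · show (if i ∈ I then z i else 1) = z i
    simp [hiI, h2 i hiI]

/-- The base point of (any sub-)moment-angle complex: all coordinates equal to `1`. -/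
def ZKIpt {m : ℕ} (K : SComplex m) (I : Finset (Fin m)) : ZKI K I :=
  ⟨fun _ => 1, by
    refine ⟨fun i => by norm_num, fun i _ => rfl, ∅, K.empty_mem, by simp, fun i _ => by norm_num⟩⟩

/-- The base point of `Z_K`. -/
def ZKpt {m : ℕ} (K : SComplex m) : ZK K := ZKIpt K Finset.univ

/-- `Z_K` as a pointed space. -/
def ZKPSp {m : ℕ} (K : SComplex m) : PSp := ⟨ZK K, ZKpt K⟩

/-! ### Generalized moment-angle complexes -/

/-- The generalized moment-angle complex `(D^k, S^{k-1})^K`, as a subspace of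
`(ℝ^k)^m`. -/
def genMomentAngle {m : ℕ} (k : ℕ) (K : SComplex m) :
    Set (Fin m → EuclideanSpace ℝ (Fin k)) :=
  {z | (∀ i, ‖z i‖ ≤ 1) ∧ ∃ σ ∈ K.faces, ∀ i, i ∉ σ → ‖z i‖ = 1}

/-- The generalized moment-angle complex as a topological space. -/
def GZK {m : ℕ} (k : ℕ) (K : SComplex m) : Type := ↥(genMomentAngle k K)

instance {m : ℕ} (k : ℕ) (K : SComplex m) : TopologicalSpace (GZK k K) := by
  unfold GZK; infer_instance

end

noncomputable section

/-- The complement of a point: `X ∖ {p}`.  For a closed manifold `X` with a CW structure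
having a single top-dimensional cell, this has the homotopy type of the skeleton obtained
by removing the top cell. -/
def Punctured (X : Type) [TopologicalSpace X] (p : X) : Type := {z : X // z ≠ p}

instance (X : Type) [TopologicalSpace X] (p : X) : TopologicalSpace (Punctured X p) := by
  unfold Punctured; infer_instance

/-- The inclusion `X ∖ {p} → X`. -/
def puncturedIncl (X : Type) [TopologicalSpace X] (p : X) : C(Punctured X p, X) :=
  ⟨Subtype.val, continuous_subtype_val⟩

end

noncomputable section
open scoped unitInterval

/-- A continuous map is null homotopic. -/
def NullHomotopic {A B : Type} [TopologicalSpace A] [TopologicalSpace B] (f : C(A, B)) : Prop :=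
  ∃ b : B, f.Homotopic (ContinuousMap.const A b)

/-- The relation defining the mapping cone of `f : A → X`: collapse `A × {0}` to a point
and glue `A × {1}` to `X` along `f`. -/
def coneRel {A X : Type} [TopologicalSpace A] [TopologicalSpace X] (f : C(A, X)) :
    ((A × I) ⊕ X) → ((A × I) ⊕ X) → Prop := fun u v =>
  (∃ a a' : A, u = Sum.inl (a, 0) ∧ v = Sum.inl (a', 0)) ∨
  (∃ a : A, u = Sum.inl (a, 1) ∧ v = Sum.inr (f a))

/-- The mapping cone `X ∪_f C(A)` of `f : A → X`. -/
def MCone {A X : Type} [TopologicalSpace A] [TopologicalSpace X] (f : C(A, X)) : Type :=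
  Quot (coneRel f)

instance {A X : Type} [TopologicalSpace A] [TopologicalSpace X] (f : C(A, X)) :
    TopologicalSpace (MCone f) := instTopologicalSpaceQuot

/-- The canonical inclusion `X → X ∪_f C(A)`. -/
def mconeIn {A X : Type} [TopologicalSpace A] [TopologicalSpace X] (f : C(A, X)) :
    C(X, MCone f) :=
  ⟨fun x => Quot.mk _ (Sum.inr x), continuous_quot_mk.comp continuous_inr⟩

/-- The cone point of the mapping cone. -/
def mconePt {A X : Type} [TopologicalSpace A] [TopologicalSpace X] (f : C(A, X)) (a : A) :
    MCone f := Quot.mk _ (Sum.inl (a, 0))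

/-- `S^{d} → X → Z` is a homotopy cofibration presenting `Z`: `Z` is homotopy equivalent to the
mapping cone of `f`, compatibly with the inclusion of `X`.  (This encodes: `Z` is obtained
from `X`, up to homotopy, by attaching a single cell along `f`.) -/
def IsConePresentation {A X Z : Type} [TopologicalSpace A] [TopologicalSpace X]
    [TopologicalSpace Z] (f : C(A, X)) (j : C(X, Z)) : Prop :=
  ∃ e : C(MCone f, Z), IsHEquiv e ∧ (e.comp (mconeIn f)).Homotopic j

/-- The homotopy fibre of `g : X → Z` over the point `z₀`. -/
def hFiber {X Z : Type} [TopologicalSpace X] [TopologicalSpace Z] (g : C(X, Z)) (z₀ : Z) :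
    Type := {p : X × C(I, Z) // p.2 0 = g p.1 ∧ p.2 1 = z₀}

instance {X Z : Type} [TopologicalSpace X] [TopologicalSpace Z] (g : C(X, Z)) (z₀ : Z) :
    TopologicalSpace (hFiber g z₀) := by unfold hFiber; infer_instance

/-- The fibre inclusion (projection) `hFiber g z₀ → X`. -/
def hFiberProj {X Z : Type} [TopologicalSpace X] [TopologicalSpace Z] (g : C(X, Z)) (z₀ : Z) :
    C(hFiber g z₀, X) :=
  ⟨fun p => p.val.1, continuous_fst.comp continuous_subtype_val⟩

end

lemma mconeIn_comp_null {A X : Type} [TopologicalSpace A] [TopologicalSpace X]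
    (f : C(A, X)) (a₀ : A) :
    ((mconeIn f).comp f).Homotopic (ContinuousMap.const A (mconePt f a₀)) := by
  refine ⟨⟨⟨fun p => Quot.mk _ (Sum.inl (p.2, unitInterval.symm p.1)), ?_⟩, ?_, ?_⟩⟩
  · exact continuous_quot_mk.comp (continuous_inl.comp
      (continuous_snd.prodMk (unitInterval.continuous_symm.comp continuous_fst)))
  · intro a
    show Quot.mk _ (Sum.inl (a, unitInterval.symm 0)) = Quot.mk _ (Sum.inr (f a))
    rw [unitInterval.symm_zero]
    exact Quot.sound (Or.inr ⟨a, rfl, rfl⟩)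
  · intro a
    show Quot.mk _ (Sum.inl (a, unitInterval.symm 1)) = Quot.mk _ (Sum.inl (a₀, 0))
    rw [unitInterval.symm_one]
    exact Quot.sound (Or.inl ⟨a, a₀, rfl, rfl⟩)

/-- **Theorem (Statement 13).**
Let `K` be a neighbourly triangulation of `S^{2n+1}` on `[m]`.  Let `\overline{Z_K}` (the
`(2n+m+1)`-skeleton of `Z_K`, realized as the complement of a point `p` of the closed
manifold `Z_K`) carry the attaching map `f : S^{2n+m+1} → \overline{Z_K}` of the top cell,
i.e. `Z_K` is presented as the mapping cone of `f` compatibly with the skeletal inclusion.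
For `I ∉ K`, `I ≠ [m]`, let `r_I : Z_{K_I} → Σ^{1+|I|}|K_I|` be the BBCG retraction (any
map admitting a right homotopy inverse `s_I`), and let
`p_I = r_I ∘ proj ∘ incl : \overline{Z_K} → Z_K → Z_{K_I} → Σ^{1+|I|}|K_I|`.
Then `p_I ∘ f` is null homotopic for every such `I`. -/
theorem attaching_map_composite_null_homotopic
    (m n : ℕ) (K : SComplex m) (hv : K.hasAllVertices)
    (htri : K.IsSphereTriangulation (2 * n + 1)) (hnb : K.IsNeighbourly n)
    (p : ZK K)
    (f : C(sphereSpace (2 * n + m + 1), Punctured (ZK K) p))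
    (hcone : IsConePresentation f (puncturedIncl (ZK K) p))
    (r : ∀ I : {I : Finset (Fin m) // I ∉ K.faces ∧ I ≠ Finset.univ},
      C(ZKI K I.1, ((KIPSp K hv I.1 I.2.1).suspN (1 + I.1.card)).carrier))
    (s : ∀ I : {I : Finset (Fin m) // I ∉ K.faces ∧ I ≠ Finset.univ},
      C(((KIPSp K hv I.1 I.2.1).suspN (1 + I.1.card)).carrier, ZKI K I.1))
    (hrs : ∀ I, ((r I).comp (s I)).Homotopic (ContinuousMap.id _)) :
    ∀ I : {I : Finset (Fin m) // I ∉ K.faces ∧ I ≠ Finset.univ},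
      NullHomotopic (((r I).comp ((ZKproj K I.1).comp (puncturedIncl (ZK K) p))).comp f) := by
  intro I
  obtain ⟨e, _, he⟩ := hcone
  set a₀ := spherePt (2 * n + m + 1)
  set g := (r I).comp (ZKproj K I.1) with hg
  have h0 := mconeIn_comp_null f a₀
  have h1 : ((puncturedIncl (ZK K) p).comp f).Homotopic
      (ContinuousMap.const _ (e (mconePt f a₀))) := by
    have step1 : ((puncturedIncl (ZK K) p).comp f).Homotopic
        ((e.comp (mconeIn f)).comp f) :=
      ContinuousMap.Homotopic.comp he.symm (ContinuousMap.Homotopic.refl f)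
    have step2 : ((e.comp (mconeIn f)).comp f).Homotopic
        (e.comp (ContinuousMap.const (sphereSpace (2 * n + m + 1)) (mconePt f a₀))) := by
      have : (e.comp (mconeIn f)).comp f = e.comp ((mconeIn f).comp f) := rfl
      rw [this]
      exact ContinuousMap.Homotopic.comp (ContinuousMap.Homotopic.refl e) h0
    have step3 : e.comp (ContinuousMap.const (sphereSpace (2 * n + m + 1)) (mconePt f a₀))
        = ContinuousMap.const _ (e (mconePt f a₀)) := rfl
    exact step1.trans (step2.trans (step3 ▸ ContinuousMap.Homotopic.refl _))
  refine ⟨g (e (mconePt f a₀)), ?_⟩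
  have : ((r I).comp ((ZKproj K I.1).comp (puncturedIncl (ZK K) p))).comp f
      = g.comp ((puncturedIncl (ZK K) p).comp f) := rfl
  rw [this]
  have h2 := ContinuousMap.Homotopic.comp (ContinuousMap.Homotopic.refl g) h1
  exact h2.trans (by exact ContinuousMap.Homotopic.refl _)
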